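/- With the 4-dimensional Singer–Thorpe curvature tensor as above (components a,b,c and α=a+τ/12, β=b+τ/12, γ=c+τ/12, α+β+γ=0), one has R̂_{ij} = (1/4)R̂ δ_{ij} with R̂ = 192abc + 32τ(ab+bc+ca) − (7/12)τ³, and R̊_{ij} = (1/4)R̊ δ_{ij} with R̊ = 96abc + 4τ(ab+bc+ca) − τ³/24. -/

import Mathlib

open scoped BigOperators

/-- Kronecker delta (the inner product in an orthonormal basis). -/
def kd {m : ℕ} (i j : Fin m) : ℝ := if i = j then 1 else 0

namespace Alg

variable {n : ℕ}

/-- Ricci tensor `ρ_{ij} = R_{aija}` of an algebraic curvature tensor. -/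
def ric (T : Fin n → Fin n → Fin n → Fin n → ℝ) (i j : Fin n) : ℝ :=
  ∑ a, T a i j a

/-- Scalar curvature (double trace). -/
def scal (T : Fin n → Fin n → Fin n → Fin n → ℝ) : ℝ := ∑ i, ric T i i

/-- `|R|² = Σ R_{abcd}²`. -/
def normSq (T : Fin n → Fin n → Fin n → Fin n → ℝ) : ℝ :=
  ∑ a, ∑ b, ∑ c, ∑ d, (T a b c d) ^ 2

/-- `R_{iabc}R_{jabc}`. -/
def RR2 (T : Fin n → Fin n → Fin n → Fin n → ℝ) (i j : Fin n) : ℝ :=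
  ∑ a, ∑ b, ∑ c, T i a b c * T j a b c

/-- `R̂ = R_{abcd}R_{abuv}R_{cduv}`. -/
def Rhat (T : Fin n → Fin n → Fin n → Fin n → ℝ) : ℝ :=
  ∑ a, ∑ b, ∑ c, ∑ d, ∑ u, ∑ v, T a b c d * T a b u v * T c d u v

/-- `R̊ = R_{abcd}R_{aucv}R_{budv}`. -/
def Rring (T : Fin n → Fin n → Fin n → Fin n → ℝ) : ℝ :=
  ∑ a, ∑ b, ∑ c, ∑ d, ∑ u, ∑ v, T a b c d * T a u c v * T b u d v

/-- `R̂_{ij} = R_{ibac}R_{jbuv}R_{acuv}`. -/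
def RhatT (T : Fin n → Fin n → Fin n → Fin n → ℝ) (i j : Fin n) : ℝ :=
  ∑ a, ∑ b, ∑ c, ∑ u, ∑ v, T i b a c * T j b u v * T a c u v

/-- `R̊_{ij} = R_{iabc}R_{jubv}R_{aucv}`. -/
def RringT (T : Fin n → Fin n → Fin n → Fin n → ℝ) (i j : Fin n) : ℝ :=
  ∑ a, ∑ b, ∑ c, ∑ u, ∑ v, T i a b c * T j u b v * T a u c v

end Alg

/-- Elementary antisymmetric 2-tensor `(e^p ∧ e^q)_{ij}`. -/
def E2 {n : ℕ} (p q i j : Fin n) : ℝ := kd p i * kd q j - kd q i * kd p j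

/-- The Singer–Thorpe algebraic curvature tensor on `ℝ⁴` with
`R₁₂₁₂=R₃₄₃₄=a`, `R₁₃₁₃=R₂₄₂₄=b`, `R₁₄₁₄=R₂₃₂₃=c`, `R₁₂₃₄=α`, `R₁₃₄₂=β`,
`R₁₄₂₃=γ`, all other components vanishing up to the curvature symmetries. -/
def stR (a b c α β γ : ℝ) (i j k l : Fin 4) : ℝ :=
  a * (E2 0 1 i j * E2 0 1 k l + E2 2 3 i j * E2 2 3 k l) +
  b * (E2 0 2 i j * E2 0 2 k l + E2 1 3 i j * E2 1 3 k l) +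
  c * (E2 0 3 i j * E2 0 3 k l + E2 1 2 i j * E2 1 2 k l) +
  α * (E2 0 1 i j * E2 2 3 k l + E2 2 3 i j * E2 0 1 k l) +
  β * (E2 0 2 i j * E2 3 1 k l + E2 3 1 i j * E2 0 2 k l) +
  γ * (E2 0 3 i j * E2 1 2 k l + E2 1 2 i j * E2 0 3 k l)

/-! The curvature operator `𝓡` of the Singer–Thorpe tensor on `Λ²ℝ⁴` is block diagonal, with
blocks `[[a, α], [α, a]]`, `[[b, β], [β, b]]`, `[[c, γ], [γ, c]]` on the pairs `(e₁∧e₂, e₃∧e₄)`,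
`(e₁∧e₃, e₄∧e₂)`, `(e₁∧e₄, e₂∧e₃)`; hence `R̂ = 8 tr 𝓡³ = 16 Σ a³ + 48 Σ a α²`. In this frame
`R̂_{ij}` and `R̊_{ij}` are multiples of `δ_{ij}`, and as `R̂ = Σᵢ R̂_{ii}`, `R̊ = Σᵢ R̊_{ii}` the
multiples are `R̂/4` and `R̊/4`. Substituting `α = a + τ/12`, … with `τ = -4 (a + b + c)` gives
the stated polynomials. -/

namespace Alg

variable {n : ℕ}

theorem Rhat_eq_sum_RhatT_diag (T : Fin n → Fin n → Fin n → Fin n → ℝ) :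
    Rhat T = ∑ i, RhatT T i i :=
  Finset.sum_congr rfl fun _ _ => Finset.sum_comm

theorem Rring_eq_sum_RringT_diag (T : Fin n → Fin n → Fin n → Fin n → ℝ) :
    Rring T = ∑ i, RringT T i i :=
  rfl

end Alg

theorem sum_mul_kd_self {n : ℕ} (μ : ℝ) : ∑ i : Fin n, μ * kd i i = n * μ := by
  simp [kd]

section SingerThorpe

variable (a b c α β γ : ℝ)

theorem stR_scal : Alg.scal (stR a b c α β γ) = -4 * (a + b + c) := by
  simp only [Alg.scal, Alg.ric, stR, E2, kd, Fin.sum_univ_four, Fin.isValue, ↓reduceIte,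
    Fin.reduceEq, mul_one, mul_zero, sub_zero, zero_sub, sub_self, add_zero, zero_add, neg_zero,
    mul_neg, neg_mul]
  ring

set_option maxHeartbeats 1000000 in
theorem stR_RhatT (i j : Fin 4) :
    Alg.RhatT (stR a b c α β γ) i j =
      (4 * (a ^ 3 + b ^ 3 + c ^ 3) + 12 * (a * α ^ 2 + b * β ^ 2 + c * γ ^ 2)) * kd i j := by
  fin_cases i <;> fin_cases j <;>
    simp only [Alg.RhatT, stR, E2, kd, Fin.sum_univ_four, Fin.reduceFinMk, Fin.isValue,
      ↓reduceIte, Fin.reduceEq, one_ne_zero, zero_ne_one, mul_ite, ite_mul, ite_self, mul_one,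
      one_mul, mul_zero, zero_mul, sub_zero, zero_sub, sub_self, add_zero, zero_add, neg_zero,
      neg_neg, mul_neg, neg_mul] <;>
    ring

set_option maxHeartbeats 1000000 in
theorem stR_RringT (i j : Fin 4) :
    Alg.RringT (stR a b c α β γ) i j =
      6 * (a * b * c + a * β * γ + b * α * γ + c * α * β) * kd i j := by
  fin_cases i <;> fin_cases j <;>
    simp only [Alg.RringT, stR, E2, kd, Fin.sum_univ_four, Fin.reduceFinMk, Fin.isValue,
      ↓reduceIte, Fin.reduceEq, one_ne_zero, zero_ne_one, mul_ite, ite_mul, ite_self, mul_one,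
      one_mul, mul_zero, zero_mul, sub_zero, zero_sub, sub_self, add_zero, zero_add, neg_zero,
      neg_neg, mul_neg, neg_mul] <;>
    ring

theorem stR_Rhat :
    Alg.Rhat (stR a b c α β γ) =
      16 * (a ^ 3 + b ^ 3 + c ^ 3) + 48 * (a * α ^ 2 + b * β ^ 2 + c * γ ^ 2) := by
  rw [Alg.Rhat_eq_sum_RhatT_diag]
  simp only [stR_RhatT, sum_mul_kd_self]
  ring

theorem stR_Rring :
    Alg.Rring (stR a b c α β γ) = 24 * (a * b * c + a * β * γ + b * α * γ + c * α * β) := by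
  rw [Alg.Rring_eq_sum_RringT_diag]
  simp only [stR_RringT, sum_mul_kd_self]
  ring

end SingerThorpe

theorem singerThorpe_cubic_contractions_general (a b c α β γ : ℝ)
    (hα : α = a + Alg.scal (stR a b c α β γ) / 12)
    (hβ : β = b + Alg.scal (stR a b c α β γ) / 12)
    (hγ : γ = c + Alg.scal (stR a b c α β γ) / 12) :
    (∀ i j : Fin 4,
      Alg.RhatT (stR a b c α β γ) i j =
        1 / 4 * Alg.Rhat (stR a b c α β γ) * kd i j) ∧
    Alg.Rhat (stR a b c α β γ) =
      192 * a * b * c +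
        32 * Alg.scal (stR a b c α β γ) * (a * b + b * c + c * a) -
          7 / 12 * (Alg.scal (stR a b c α β γ)) ^ 3 ∧
    (∀ i j : Fin 4,
      Alg.RringT (stR a b c α β γ) i j =
        1 / 4 * Alg.Rring (stR a b c α β γ) * kd i j) ∧
    Alg.Rring (stR a b c α β γ) =
      96 * a * b * c +
        4 * Alg.scal (stR a b c α β γ) * (a * b + b * c + c * a) -
          (Alg.scal (stR a b c α β γ)) ^ 3 / 24 := by
  rw [stR_scal] at hα hβ hγ ⊢
  refine ⟨fun i j => ?_, ?_, fun i j => ?_, ?_⟩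
  · rw [stR_RhatT, stR_Rhat]; ring
  · rw [stR_Rhat, hα, hβ, hγ]; ring
  · rw [stR_RringT, stR_Rring]; ring
  · rw [stR_Rring, hα, hβ, hγ]; ring

/-- for the Singer–Thorpe curvature tensor with `α+β+γ=0`,
`α=a+τ/12`, `β=b+τ/12`, `γ=c+τ/12`, one has `R̂_{ij} = (1/4)R̂ δ_{ij}` with
`R̂ = 192abc + 32τ(ab+bc+ca) − (7/12)τ³`, and `R̊_{ij} = (1/4)R̊ δ_{ij}` with
`R̊ = 96abc + 4τ(ab+bc+ca) − τ³/24`. -/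
theorem singerThorpe_cubic_contractions (a b c α β γ : ℝ)
    (hsum : α + β + γ = 0)
    (hα : α = a + Alg.scal (stR a b c α β γ) / 12)
    (hβ : β = b + Alg.scal (stR a b c α β γ) / 12)
    (hγ : γ = c + Alg.scal (stR a b c α β γ) / 12) :
    (∀ i j : Fin 4,
      Alg.RhatT (stR a b c α β γ) i j =
        1 / 4 * Alg.Rhat (stR a b c α β γ) * kd i j) ∧
    Alg.Rhat (stR a b c α β γ) =
      192 * a * b * c +
        32 * Alg.scal (stR a b c α β γ) * (a * b + b * c + c * a) -
          7 / 12 * (Alg.scal (stR a b c α β γ)) ^ 3 ∧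
    (∀ i j : Fin 4,
      Alg.RringT (stR a b c α β γ) i j =
        1 / 4 * Alg.Rring (stR a b c α β γ) * kd i j) ∧
    Alg.Rring (stR a b c α β γ) =
      96 * a * b * c +
        4 * Alg.scal (stR a b c α β γ) * (a * b + b * c + c * a) -
          (Alg.scal (stR a b c α β γ)) ^ 3 / 24 :=
  singerThorpe_cubic_contractions_general a b c α β γ hα hβ hγ
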